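/- Let ζ = e^{2πi/3} and ρ : ℂ⁴ → ℂ⁴, ρ(u₁,u₂,u₃,u₄) = (ζu₁, ζu₂, ζ²u₃, ζu₄). With μ = du₁, ν = du₂, θ = du₃ − u₂ du₁, η = du₄, the forms α = μ∧μ̄, β₁ = ν∧ν̄, β₂ = ν∧η̄, β₃ = ν̄∧η, ξ₁ = −θ∧μ̄∧ν̄, ξ₂ = −θ∧μ̄∧η̄, ξ₃ = θ̄∧μ∧η are all ρ-invariant: ρ*α = α, ρ*βᵢ = βᵢ and ρ*ξᵢ = ξᵢ for i = 1,2,3. -/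

import Mathlib

noncomputable section

open Complex

/-- A `1`-form associated to an `ℝ`-linear functional. -/
def oneForm {E : Type*} [AddCommGroup E] [Module ℝ E] (f : E →ₗ[ℝ] ℂ) :
    E [⋀^Fin 1]→ₗ[ℝ] ℂ :=
  AlternatingMap.ofSubsingleton ℝ E ℂ (0 : Fin 1) f

/-- The wedge product of complex-valued alternating forms, via `AlternatingMap.domCoprod`
(the sum over shuffles with signs). -/
def wedge {E : Type*} [AddCommGroup E] [Module ℝ E] {a b : ℕ}
    (f : E [⋀^Fin a]→ₗ[ℝ] ℂ) (g : E [⋀^Fin b]→ₗ[ℝ] ℂ) :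
    E [⋀^Fin (a + b)]→ₗ[ℝ] ℂ :=
  ((LinearMap.mul' ℝ ℂ).compAlternatingMap (f.domCoprod g)).domDomCongr finSumFinEquiv

/-- The exterior derivative of a field of alternating `k`-forms, as a raw function of
`k+1` vectors: `(dω)ₓ(v₀,…,v_k) = Σᵢ (-1)ⁱ (∂_{vᵢ} ω(v₀,…,v̂ᵢ,…,v_k))ₓ`. -/
def rawExtDeriv {E : Type*} [NormedAddCommGroup E] [NormedSpace ℝ E] {k : ℕ}
    (ω : E → E [⋀^Fin k]→ₗ[ℝ] ℂ) : E → (Fin (k + 1) → E) → ℂ :=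
  fun x v => ∑ i : Fin (k + 1),
    (-1 : ℂ) ^ (i : ℕ) * fderiv ℝ (fun y => ω y (fun j => v (i.succAbove j))) x (v i)

/-- Complex conjugation, as an `ℝ`-linear map `ℂ → ℂ`. -/
def conjLM : ℂ →ₗ[ℝ] ℂ := Complex.conjAe.toLinearMap

/-- Complex conjugation of a complex-valued form. -/
def conjForm {E : Type*} [AddCommGroup E] [Module ℝ E] {k : ℕ}
    (f : E [⋀^Fin k]→ₗ[ℝ] ℂ) : E [⋀^Fin k]→ₗ[ℝ] ℂ :=
  conjLM.compAlternatingMap f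

/-- The pullback of a field of `k`-forms under a map `f`, defined using the derivative
of `f`: `(f*ω)ₓ(v₁,…,v_k) = ω_{f(x)}(df ₓ v₁, …, df ₓ v_k)`. -/
def pullback {E : Type*} [NormedAddCommGroup E] [NormedSpace ℝ E] {k : ℕ}
    (f : E → E) (ω : E → E [⋀^Fin k]→ₗ[ℝ] ℂ) : E → (Fin k → E) → ℂ :=
  fun x v => ω (f x) fun i => fderiv ℝ f x (v i)

/-- `ℂ⁴`, viewed as the real manifold `ℝ⁸`. -/
abbrev E4 : Type := ℂ × ℂ × ℂ × ℂ

-- the coordinate functions `u₁, u₂, u₃, u₄` as `ℝ`-linear maps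
def pr1 : E4 →ₗ[ℝ] ℂ := LinearMap.fst ℝ ℂ (ℂ × ℂ × ℂ)
def pr2 : E4 →ₗ[ℝ] ℂ := (LinearMap.fst ℝ ℂ (ℂ × ℂ)).comp (LinearMap.snd ℝ ℂ (ℂ × ℂ × ℂ))
def pr3 : E4 →ₗ[ℝ] ℂ :=
  (LinearMap.fst ℝ ℂ ℂ).comp ((LinearMap.snd ℝ ℂ (ℂ × ℂ)).comp (LinearMap.snd ℝ ℂ (ℂ × ℂ × ℂ)))
def pr4 : E4 →ₗ[ℝ] ℂ :=
  (LinearMap.snd ℝ ℂ ℂ).comp ((LinearMap.snd ℝ ℂ (ℂ × ℂ)).comp (LinearMap.snd ℝ ℂ (ℂ × ℂ × ℂ)))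

/-- `μ = du₁`. -/
def μ : E4 → E4 [⋀^Fin 1]→ₗ[ℝ] ℂ := fun _ => oneForm pr1
/-- `ν = du₂`. -/
def ν : E4 → E4 [⋀^Fin 1]→ₗ[ℝ] ℂ := fun _ => oneForm pr2
/-- `θ = du₃ - u₂ du₁`. -/
def θF : E4 → E4 [⋀^Fin 1]→ₗ[ℝ] ℂ := fun u => oneForm pr3 - u.2.1 • oneForm pr1
/-- `η = du₄`. -/
def η : E4 → E4 [⋀^Fin 1]→ₗ[ℝ] ℂ := fun _ => oneForm pr4

def μb : E4 → E4 [⋀^Fin 1]→ₗ[ℝ] ℂ := fun u => conjForm (μ u)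
def νb : E4 → E4 [⋀^Fin 1]→ₗ[ℝ] ℂ := fun u => conjForm (ν u)
def θb : E4 → E4 [⋀^Fin 1]→ₗ[ℝ] ℂ := fun u => conjForm (θF u)
def ηb : E4 → E4 [⋀^Fin 1]→ₗ[ℝ] ℂ := fun u => conjForm (η u)

/-- The map `ρ(u₁,u₂,u₃,u₄) = (ζu₁, ζu₂, ζ²u₃, ζu₄)`. -/
def ρmap (ζ : ℂ) (u : E4) : E4 :=
  (ζ * u.1, ζ * u.2.1, ζ ^ 2 * u.2.2.1, ζ * u.2.2.2)

/-- `α = μ∧μ̄`. -/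
def αF : E4 → E4 [⋀^Fin 2]→ₗ[ℝ] ℂ := fun u => wedge (μ u) (μb u)
/-- `β₁ = ν∧ν̄`. -/
def β₁F : E4 → E4 [⋀^Fin 2]→ₗ[ℝ] ℂ := fun u => wedge (ν u) (νb u)
/-- `β₂ = ν∧η̄`. -/
def β₂F : E4 → E4 [⋀^Fin 2]→ₗ[ℝ] ℂ := fun u => wedge (ν u) (ηb u)
/-- `β₃ = ν̄∧η`. -/
def β₃F : E4 → E4 [⋀^Fin 2]→ₗ[ℝ] ℂ := fun u => wedge (νb u) (η u)
/-- `ξ₁ = −θ∧μ̄∧ν̄`. -/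
def ξ₁F : E4 → E4 [⋀^Fin 3]→ₗ[ℝ] ℂ := fun u => -wedge (wedge (θF u) (μb u)) (νb u)
/-- `ξ₂ = −θ∧μ̄∧η̄`. -/
def ξ₂F : E4 → E4 [⋀^Fin 3]→ₗ[ℝ] ℂ := fun u => -wedge (wedge (θF u) (μb u)) (ηb u)
/-- `ξ₃ = θ̄∧μ∧η`. -/
def ξ₃F : E4 → E4 [⋀^Fin 3]→ₗ[ℝ] ℂ := fun u => wedge (wedge (θb u) (μ u)) (η u)

/-!
`ρ` is `ℝ`-linear, so `ρ*` acts at each point by precomposition with `ρ`. It scales `μ`, `ν`, `η`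
by `ζ` and `θ` by `ζ²` (the term `u₂ du₁` picks up `ζ · ζ`), hence the conjugate forms by `ζ̄` and
`ζ̄²`, and a wedge product of such eigenforms is an eigenform for the product of the eigenvalues.
Each of the seven forms is thus multiplied by `|ζ|²` or `|ζ|⁴`, which is `1`.
-/

open ComplexConjugate

section Forms

variable {E F : Type*} [AddCommGroup E] [Module ℝ E] [AddCommGroup F] [Module ℝ F] {a b k : ℕ}

theorem wedge_compLinearMap (L : F →ₗ[ℝ] E) (f : E [⋀^Fin a]→ₗ[ℝ] ℂ) (g : E [⋀^Fin b]→ₗ[ℝ] ℂ) :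
    (wedge f g).compLinearMap L = wedge (f.compLinearMap L) (g.compLinearMap L) := by
  ext v
  simp only [wedge, AlternatingMap.domDomCongr_apply, LinearMap.compAlternatingMap_apply,
    AlternatingMap.domCoprod_apply, sum_apply, map_sum, AlternatingMap.compLinearMap_apply]
  refine Finset.sum_congr rfl fun σ _ => ?_
  induction σ using Quotient.inductionOn' with
  | h p =>
    rw [AlternatingMap.domCoprod.summand_mk'', AlternatingMap.domCoprod.summand_mk'']
    simp [Function.comp_def]

theorem wedge_compAlternatingMap (A B C : ℂ →ₗ[ℝ] ℂ) (hABC : ∀ x y, A x * B y = C (x * y))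
    (f : E [⋀^Fin a]→ₗ[ℝ] ℂ) (g : E [⋀^Fin b]→ₗ[ℝ] ℂ) :
    wedge (A.compAlternatingMap f) (B.compAlternatingMap g) = C.compAlternatingMap (wedge f g) := by
  ext v
  simp only [wedge, AlternatingMap.domDomCongr_apply, LinearMap.compAlternatingMap_apply,
    AlternatingMap.domCoprod_apply, sum_apply, map_sum]
  refine Finset.sum_congr rfl fun σ _ => ?_
  induction σ using Quotient.inductionOn' with
  | h p =>
    rw [AlternatingMap.domCoprod.summand_mk'', AlternatingMap.domCoprod.summand_mk'']
    simp [hABC]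

theorem smul_id_compAlternatingMap (c : ℂ) (f : E [⋀^Fin k]→ₗ[ℝ] ℂ) :
    (c • LinearMap.id).compAlternatingMap f = c • f := by
  ext; simp

theorem wedge_smul_smul (c d : ℂ) (f : E [⋀^Fin a]→ₗ[ℝ] ℂ) (g : E [⋀^Fin b]→ₗ[ℝ] ℂ) :
    wedge (c • f) (d • g) = (c * d) • wedge f g := by
  simp only [← smul_id_compAlternatingMap]
  refine wedge_compAlternatingMap _ _ _ (fun x y => ?_) f g
  simp only [LinearMap.smul_apply, LinearMap.id_apply, smul_eq_mul]
  ring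

theorem conjForm_smul (c : ℂ) (f : E [⋀^Fin k]→ₗ[ℝ] ℂ) :
    conjForm (c • f) = conj c • conjForm f := by
  ext v
  simp [conjForm, conjLM]

/-- `L^* ω = c • ω`. -/
def IsEigenform (L : E →ₗ[ℝ] E) (c : ℂ) (ω : E → E [⋀^Fin k]→ₗ[ℝ] ℂ) : Prop :=
  ∀ x, (ω (L x)).compLinearMap L = c • ω x

namespace IsEigenform

variable {L : E →ₗ[ℝ] E} {c d : ℂ}

theorem wedge {ω : E → E [⋀^Fin a]→ₗ[ℝ] ℂ} {ω' : E → E [⋀^Fin b]→ₗ[ℝ] ℂ}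
    (hω : IsEigenform L c ω) (hω' : IsEigenform L d ω') :
    IsEigenform L (c * d) fun x => _root_.wedge (ω x) (ω' x) := fun x => by
  rw [wedge_compLinearMap, hω, hω', wedge_smul_smul]

theorem neg {ω : E → E [⋀^Fin k]→ₗ[ℝ] ℂ} (hω : IsEigenform L c ω) :
    IsEigenform L c fun x => -ω x := fun x => by
  rw [smul_neg, ← hω x]
  rfl

theorem conjForm {ω : E → E [⋀^Fin k]→ₗ[ℝ] ℂ} (hω : IsEigenform L c ω) :
    IsEigenform L (conj c) fun x => _root_.conjForm (ω x) := fun x => by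
  rw [← conjForm_smul, ← hω x]
  rfl

end IsEigenform

end Forms

theorem IsEigenform.pullback_eq_self {E : Type*} [NormedAddCommGroup E] [NormedSpace ℝ E]
    {k : ℕ} {L : E →L[ℝ] E} {c : ℂ} {ω : E → E [⋀^Fin k]→ₗ[ℝ] ℂ}
    (hω : IsEigenform (L : E →ₗ[ℝ] E) c ω) (hc : c = 1) :
    pullback L ω = fun x => ⇑(ω x) := by
  funext x v
  simp only [pullback, L.fderiv]
  rw [← one_smul ℂ (ω x), ← hc, ← hω x]
  rfl

def ρCLM (ζ : ℂ) : E4 →L[ℝ] E4 :=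
  let m (c : ℂ) : ℂ →L[ℝ] ℂ := c • ContinuousLinearMap.id ℝ ℂ
  (m ζ).prodMap ((m ζ).prodMap ((m (ζ ^ 2)).prodMap (m ζ)))

theorem coe_ρCLM (ζ : ℂ) : ⇑(ρCLM ζ) = ρmap ζ :=
  rfl

section Eigenforms

variable (ζ : ℂ)

theorem isEigenform_μ : IsEigenform (ρCLM ζ : E4 →ₗ[ℝ] E4) ζ μ := fun _ => by
  ext v
  simp [μ, oneForm, pr1, ρCLM]

theorem isEigenform_ν : IsEigenform (ρCLM ζ : E4 →ₗ[ℝ] E4) ζ ν := fun _ => by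
  ext v
  simp [ν, oneForm, pr2, ρCLM]

theorem isEigenform_η : IsEigenform (ρCLM ζ : E4 →ₗ[ℝ] E4) ζ η := fun _ => by
  ext v
  simp [η, oneForm, pr4, ρCLM]

theorem isEigenform_θF : IsEigenform (ρCLM ζ : E4 →ₗ[ℝ] E4) (ζ ^ 2) θF := fun _ => by
  ext v
  simp [θF, oneForm, pr1, pr3, ρCLM]
  ring

end Eigenforms

/-- For `ζ = e^{2πi/3}` and `ρ(u₁,u₂,u₃,u₄) = (ζu₁,ζu₂,ζ²u₃,ζu₄)`, the forms `α = μ∧μ̄`,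
`β₁ = ν∧ν̄`, `β₂ = ν∧η̄`, `β₃ = ν̄∧η`, `ξ₁ = −θ∧μ̄∧ν̄`, `ξ₂ = −θ∧μ̄∧η̄`, `ξ₃ = θ̄∧μ∧η` are
all `ρ`-invariant: `ρ*α = α`, `ρ*βᵢ = βᵢ`, `ρ*ξᵢ = ξᵢ` for `i = 1,2,3`. -/
theorem forms_are_rho_invariant (ζ : ℂ)
    (hζ : ζ = Complex.exp (2 * Real.pi * Complex.I / 3)) :
    pullback (ρmap ζ) αF = (fun x => ⇑(αF x)) ∧
    pullback (ρmap ζ) β₁F = (fun x => ⇑(β₁F x)) ∧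
    pullback (ρmap ζ) β₂F = (fun x => ⇑(β₂F x)) ∧
    pullback (ρmap ζ) β₃F = (fun x => ⇑(β₃F x)) ∧
    pullback (ρmap ζ) ξ₁F = (fun x => ⇑(ξ₁F x)) ∧
    pullback (ρmap ζ) ξ₂F = (fun x => ⇑(ξ₂F x)) ∧
    pullback (ρmap ζ) ξ₃F = (fun x => ⇑(ξ₃F x)) := by
  have hζ_unit : ζ * conj ζ = 1 := by
    rw [hζ, mul_conj', show 2 * (Real.pi : ℂ) * I / 3 = ((2 * Real.pi / 3 : ℝ) : ℂ) * I by
      push_cast; ring, norm_exp_ofReal_mul_I]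
    norm_num
  have hμ := isEigenform_μ ζ
  have hν := isEigenform_ν ζ
  have hη := isEigenform_η ζ
  have hθ := isEigenform_θF ζ
  rw [← coe_ρCLM]
  refine ⟨(hμ.wedge hμ.conjForm).pullback_eq_self ?_, (hν.wedge hν.conjForm).pullback_eq_self ?_,
    (hν.wedge hη.conjForm).pullback_eq_self ?_, (hν.conjForm.wedge hη).pullback_eq_self ?_,
    ((hθ.wedge hμ.conjForm).wedge hν.conjForm).neg.pullback_eq_self ?_,
    ((hθ.wedge hμ.conjForm).wedge hη.conjForm).neg.pullback_eq_self ?_,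
    ((hθ.conjForm.wedge hμ).wedge hη).pullback_eq_self ?_⟩
  all_goals grind
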